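/- Progress: if M is a closed well-typed LMML term, Σ;·;· ⊢_i M : T, and h is a heap well-typed with respect to Σ, then either M is a value or there exist M', h' with (M,h) → (M',h'). -/
import Mathlib


/-! Core syntax of LMML -/

abbrev LVar := String
abbrev GVar := String
abbrev Loc := Nat

inductive Ty : Type where
  | unit : Ty
  | int : Ty
  | arrow : Ty → Ty → Ty
  | ref : Ty → Ty
  | box : List (LVar × Ty) → Ty → Ty

abbrev LCtx := List (LVar × Ty)
abbrev GCtx := List (GVar × (LCtx × Ty))
abbrev SCtx := List (Loc × Ty)

def lookup {κ α : Type} [BEq κ] (l : List (κ × α)) (k : κ) : Option α :=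
  (l.find? (fun p => p.1 == k)).map (·.2)

inductive Tm : Type where
  | unit : Tm
  | int : Int → Tm
  | lvar : LVar → Tm
  | gvar : GVar → List (LVar × Tm) → Tm
  | loc : Loc → Tm
  | lam : LVar → Tm → Tm
  | app : Tm → Tm → Tm
  | rec' : LVar → LVar → Tm → Tm
  | arith : (Int → Int → Int) → Tm → Tm → Tm
  | ite : Tm → Tm → Tm → Tm
  | ref : Tm → Tm
  | deref : Tm → Tm
  | assign : Tm → Tm → Tm
  | box : Tm → Tm
  | letbox : GVar → Tm → Tm → Tm

inductive IsValue : Tm → Prop where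
  | unit : IsValue .unit
  | int {n} : IsValue (.int n)
  | loc {l} : IsValue (.loc l)
  | lvar {x} : IsValue (.lvar x)
  | lam {x M} : IsValue (.lam x M)
  | rec' {f x M} : IsValue (.rec' f x M)
  | box {M} : IsValue (.box M)

def eraseKey {α : Type} (x : String) (l : List (String × α)) : List (String × α) :=
  l.filter (fun p => p.1 ≠ x)

/-! Local substitution (values substituted for local variables; `box` binds
    all local variables; explicit substitutions on global variables compose). -/
mutual
def Tm.lsubst : Tm → List (LVar × Tm) → Tm
  | .unit, _ => .unit
  | .int n, _ => .int n
  | .lvar x, δ => (lookup δ x).getD (.lvar x)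
  | .gvar u δ0, δ => .gvar u (lsubstList δ0 δ)
  | .loc l, _ => .loc l
  | .lam x M, δ => .lam x (M.lsubst (eraseKey x δ))
  | .app M N, δ => .app (M.lsubst δ) (N.lsubst δ)
  | .rec' f x M, δ => .rec' f x (M.lsubst (eraseKey x (eraseKey f δ)))
  | .arith op M N, δ => .arith op (M.lsubst δ) (N.lsubst δ)
  | .ite M N P, δ => .ite (M.lsubst δ) (N.lsubst δ) (P.lsubst δ)
  | .ref M, δ => .ref (M.lsubst δ)
  | .deref M, δ => .deref (M.lsubst δ)
  | .assign M N, δ => .assign (M.lsubst δ) (N.lsubst δ)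
  | .box M, _ => .box M
  | .letbox u M N, δ => .letbox u (M.lsubst δ) (N.lsubst δ)

def lsubstList : List (LVar × Tm) → List (LVar × Tm) → List (LVar × Tm)
  | [], _ => []
  | (x, V) :: rest, δ => (x, V.lsubst δ) :: lsubstList rest δ
end

/-! Global (call-by-name) substitution. -/
mutual
def Tm.gsubst : Tm → List (GVar × Tm) → Tm
  | .unit, _ => .unit
  | .int n, _ => .int n
  | .lvar x, _ => .lvar x
  | .gvar u δ0, σ =>
      match lookup σ u with
      | some M0 => M0.lsubst (gsubstList δ0 σ)
      | none => .gvar u (gsubstList δ0 σ)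
  | .loc l, _ => .loc l
  | .lam x M, σ => .lam x (M.gsubst σ)
  | .app M N, σ => .app (M.gsubst σ) (N.gsubst σ)
  | .rec' f x M, σ => .rec' f x (M.gsubst σ)
  | .arith op M N, σ => .arith op (M.gsubst σ) (N.gsubst σ)
  | .ite M N P, σ => .ite (M.gsubst σ) (N.gsubst σ) (P.gsubst σ)
  | .ref M, σ => .ref (M.gsubst σ)
  | .deref M, σ => .deref (M.gsubst σ)
  | .assign M N, σ => .assign (M.gsubst σ) (N.gsubst σ)
  | .box M, σ => .box (M.gsubst σ)
  | .letbox u M N, σ => .letbox u (M.gsubst σ) (N.gsubst (eraseKey u σ))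

def gsubstList : List (LVar × Tm) → List (GVar × Tm) → List (LVar × Tm)
  | [], _ => []
  | (x, V) :: rest, σ => (x, V.gsubst σ) :: gsubstList rest σ
end

/-! Typing.  The layer index `i` ranges over {0,1}; the box rules are only
    available at layer 1. -/
mutual
inductive Typing : SCtx → GCtx → LCtx → Nat → Tm → Ty → Prop where
  | unit {Sg Ps G i} : Typing Sg Ps G i .unit .unit
  | int {Sg Ps G i n} : Typing Sg Ps G i (.int n) .int
  | lvar {Sg Ps G i x T} : lookup G x = some T → Typing Sg Ps G i (.lvar x) T
  | gvar {Sg Ps G i u δ G' T} :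
      lookup Ps u = some (G', T) → SubstTyping Sg Ps G i δ G' →
      Typing Sg Ps G i (.gvar u δ) T
  | loc {Sg Ps G i l T} : lookup Sg l = some T → Typing Sg Ps G i (.loc l) (.ref T)
  | lam {Sg Ps G i x M T1 T2} :
      Typing Sg Ps ((x, T1) :: G) i M T2 → Typing Sg Ps G i (.lam x M) (.arrow T1 T2)
  | app {Sg Ps G i M1 M2 T1 T2} :
      Typing Sg Ps G i M1 (.arrow T1 T2) → Typing Sg Ps G i M2 T1 →
      Typing Sg Ps G i (.app M1 M2) T2
  | rec' {Sg Ps G i f x M T1 T2} :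
      Typing Sg Ps ((x, T1) :: (f, .arrow T1 T2) :: G) i M T2 →
      Typing Sg Ps G i (.rec' f x M) (.arrow T1 T2)
  | arith {Sg Ps G i op M1 M2} :
      Typing Sg Ps G i M1 .int → Typing Sg Ps G i M2 .int →
      Typing Sg Ps G i (.arith op M1 M2) .int
  | ite {Sg Ps G i M1 M2 M3 T} :
      Typing Sg Ps G i M1 .int → Typing Sg Ps G i M2 T → Typing Sg Ps G i M3 T →
      Typing Sg Ps G i (.ite M1 M2 M3) T
  | ref {Sg Ps G i M T} : Typing Sg Ps G i M T → Typing Sg Ps G i (.ref M) (.ref T)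
  | deref {Sg Ps G i M T} : Typing Sg Ps G i M (.ref T) → Typing Sg Ps G i (.deref M) T
  | assign {Sg Ps G i M1 M2 T} :
      Typing Sg Ps G i M1 (.ref T) → Typing Sg Ps G i M2 T →
      Typing Sg Ps G i (.assign M1 M2) .unit
  | box {Sg Ps G G' M T} :
      Typing Sg Ps G' 0 M T → Typing Sg Ps G 1 (.box M) (.box G' T)
  | letbox {Sg Ps G u M1 M2 G' T T'} :
      Typing Sg Ps G 1 M1 (.box G' T) →
      Typing Sg ((u, (G', T)) :: Ps) G 1 M2 T' →
      Typing Sg Ps G 1 (.letbox u M1 M2) T'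

inductive SubstTyping : SCtx → GCtx → LCtx → Nat → List (LVar × Tm) → LCtx → Prop where
  | nil {Sg Ps G i} : SubstTyping Sg Ps G i [] []
  | cons {Sg Ps G i x V T δ G'} :
      Typing Sg Ps G i V T → IsValue V → SubstTyping Sg Ps G i δ G' →
      SubstTyping Sg Ps G i ((x, V) :: δ) ((x, T) :: G')
end

/-- Typing of a global substitution: `Σ;Ψ ⊢ σ : Ψ'`. -/
def GSubstTyping (Sg : SCtx) (Ps : GCtx) (σ : List (GVar × Tm)) (Ps' : GCtx) : Prop :=
  (∀ u, (lookup Ps' u).isSome ↔ (lookup σ u).isSome) ∧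
  (∀ u G' T, lookup Ps' u = some (G', T) →
    ∃ M, lookup σ u = some M ∧ Typing Sg Ps G' 0 M T)

/-! Heaps and operational semantics -/

abbrev Heap := Loc → Option Tm

def hupdate (h : Heap) (l : Loc) (V : Tm) : Heap :=
  fun l' => if l' = l then some V else h l'

/-- Well-typed heaps: `Σ;Ψ;Γ ⊢ h : heap`. -/
def HeapTyped (Sg : SCtx) (Ps : GCtx) (G : LCtx) (h : Heap) : Prop :=
  (∀ l, (lookup Sg l).isSome ↔ (h l).isSome) ∧
  (∀ l T, lookup Sg l = some T →
    ∃ V, h l = some V ∧ IsValue V ∧ Typing Sg Ps G 1 V T)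

/-- Store context extension. -/
def SCtxLe (Sg Sg' : SCtx) : Prop :=
  ∀ l T, lookup Sg l = some T → lookup Sg' l = some T

/-! Evaluation contexts -/

inductive ECtx : Type where
  | hole : ECtx
  | appL : ECtx → Tm → ECtx
  | appR : Tm → ECtx → ECtx
  | arithL : (Int → Int → Int) → ECtx → Tm → ECtx
  | arithR : (Int → Int → Int) → Tm → ECtx → ECtx
  | ite : ECtx → Tm → Tm → ECtx
  | ref : ECtx → ECtx
  | deref : ECtx → ECtx
  | assignL : ECtx → Tm → ECtx
  | assignR : Tm → ECtx → ECtx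
  | letboxL : GVar → ECtx → Tm → ECtx
  | letboxR : GVar → Tm → ECtx → ECtx

def ECtx.plug : ECtx → Tm → Tm
  | .hole, M => M
  | .appL K N, M => .app (K.plug M) N
  | .appR V K, M => .app V (K.plug M)
  | .arithL op K N, M => .arith op (K.plug M) N
  | .arithR op V K, M => .arith op V (K.plug M)
  | .ite K N P, M => .ite (K.plug M) N P
  | .ref K, M => .ref (K.plug M)
  | .deref K, M => .deref (K.plug M)
  | .assignL K N, M => .assign (K.plug M) N
  | .assignR V K, M => .assign V (K.plug M)
  | .letboxL u K N, M => .letbox u (K.plug M) N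
  | .letboxR u V K, M => .letbox u V (K.plug M)

inductive ECtxWf : ECtx → Prop where
  | hole : ECtxWf .hole
  | appL {K N} : ECtxWf K → ECtxWf (.appL K N)
  | appR {V K} : IsValue V → ECtxWf K → ECtxWf (.appR V K)
  | arithL {op K N} : ECtxWf K → ECtxWf (.arithL op K N)
  | arithR {op V K} : IsValue V → ECtxWf K → ECtxWf (.arithR op V K)
  | ite {K N P} : ECtxWf K → ECtxWf (.ite K N P)
  | ref {K} : ECtxWf K → ECtxWf (.ref K)
  | deref {K} : ECtxWf K → ECtxWf (.deref K)
  | assignL {K N} : ECtxWf K → ECtxWf (.assignL K N)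
  | assignR {V K} : IsValue V → ECtxWf K → ECtxWf (.assignR V K)
  | letboxL {u K N} : ECtxWf K → ECtxWf (.letboxL u K N)
  | letboxR {u V K} : IsValue V → ECtxWf K → ECtxWf (.letboxR u V K)

/-- Small-step operational semantics on (term, heap) pairs. -/
inductive Step : Tm × Heap → Tm × Heap → Prop where
  | beta {x M V h} : IsValue V →
      Step (.app (.lam x M) V, h) (M.lsubst [(x, V)], h)
  | arith {op n m h} :
      Step (.arith op (.int n) (.int m), h) (.int (op n m), h)
  | iteT {n M N h} : n ≠ 0 → Step (.ite (.int n) M N, h) (M, h)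
  | iteF {M N h} : Step (.ite (.int 0) M N, h) (N, h)
  | ref {V l h} : IsValue V → h l = none →
      Step (.ref V, h) (.loc l, hupdate h l V)
  | deref {l V h} : h l = some V → Step (.deref (.loc l), h) (V, h)
  | assign {l V h} : IsValue V → (h l).isSome →
      Step (.assign (.loc l) V, h) (.unit, hupdate h l V)
  | rec' {f x M V h} : IsValue V →
      Step (.app (.rec' f x M) V, h) (M.lsubst [(x, V), (f, .rec' f x M)], h)
  | letbox {u M1 M2 h} :
      Step (.letbox u (.box M1) M2, h) (M2.gsubst [(u, M1)], h)
  | ktx {K M1 M2 h1 h2} : ECtxWf K → K ≠ .hole → Step (M1, h1) (M2, h2) →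
      Step (K.plug M1, h1) (K.plug M2, h2)

abbrev StepStar : Tm × Heap → Tm × Heap → Prop := Relation.ReflTransGen Step

/-- `(M, h) ⇓` : termination. -/
def Terminates (c : Tm × Heap) : Prop :=
  ∃ V h', IsValue V ∧ StepStar c (V, h')

lemma fresh_loc (Sg : SCtx) : ∃ l, lookup Sg l = none := by
  refine ⟨(Sg.map Prod.fst).foldr max 0 + 1, ?_⟩
  have hmax : ∀ p ∈ Sg, p.1 ≤ (Sg.map Prod.fst).foldr max 0 := by
    induction Sg with
    | nil => simp
    | cons q rest ih =>
      intro p hp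
      simp only [List.mem_cons] at hp
      simp only [List.map_cons, List.foldr_cons]
      rcases hp with rfl | hmem
      · exact le_max_left _ _
      · exact le_trans (ih p hmem) (le_max_right _ _)
  unfold lookup
  rw [List.find?_eq_none.2]
  · rfl
  · intro p hp
    have := hmax p hp
    intro hpe
    have h2 : p.1 = List.foldr max 0 (List.map Prod.fst Sg) + 1 := by
      exact eq_of_beq hpe
    rw [h2] at this
    exact Nat.not_succ_le_self _ this

lemma canon_arrow {Sg i V T1 T2} (hT : Typing Sg [] [] i V (.arrow T1 T2))
    (hV : IsValue V) : (∃ x M, V = .lam x M) ∨ (∃ f x M, V = .rec' f x M) := by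
  cases hV <;> cases hT <;> first
    | (left; exact ⟨_, _, rfl⟩)
    | (right; exact ⟨_, _, _, rfl⟩)
    | simp_all [lookup]

lemma canon_int {Sg i V} (hT : Typing Sg [] [] i V .int) (hV : IsValue V) :
    ∃ n, V = .int n := by
  cases hV <;> cases hT <;> first | exact ⟨_, rfl⟩ | simp_all [lookup]

lemma canon_ref {Sg i V T} (hT : Typing Sg [] [] i V (.ref T)) (hV : IsValue V) :
    ∃ l, V = .loc l ∧ lookup Sg l = some T := by
  cases hV <;> cases hT <;> first | exact ⟨_, rfl, by assumption⟩ | simp_all [lookup]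

lemma canon_box {Sg i V G' T} (hT : Typing Sg [] [] i V (.box G' T)) (hV : IsValue V) :
    ∃ M, V = .box M := by
  cases hV <;> cases hT <;> first | exact ⟨_, rfl⟩ | simp_all [lookup]

/-- **Progress**: a closed well-typed term is a value or can step. -/
theorem progress {Sg : SCtx} {i : Nat} {M : Tm} {T : Ty} {h : Heap}
    (hM : Typing Sg [] [] i M T) (hh : HeapTyped Sg [] [] h) :
    IsValue M ∨ ∃ M' h', Step (M, h) (M', h') := by
  have key : ∀ n : Nat, ∀ M : Tm, sizeOf M ≤ n → ∀ {i : Nat} {T : Ty},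
      Typing Sg [] [] i M T → IsValue M ∨ ∃ M' h', Step (M, h) (M', h') := by
    intro n
    induction n with
    | zero => intro M0 hle; cases M0 <;> simp at hle
    | succ n IHn =>
      intro M hle i T hM
      have ih : ∀ M0 : Tm, sizeOf M0 < sizeOf M → ∀ {i0 : Nat} {T0 : Ty},
          Typing Sg [] [] i0 M0 T0 → IsValue M0 ∨ ∃ M' h', Step (M0, h) (M', h') := by
        intro M0 hlt i0 T0 hM0
        exact IHn M0 (by omega) hM0
      cases M with
      | unit => exact .inl .unit
      | int n => exact .inl .int
      | lvar x => cases hM with | lvar hx => simp [lookup] at hx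
      | gvar u δ => cases hM with | gvar hu _ => simp [lookup] at hu
      | loc l => exact .inl .loc
      | lam x M => exact .inl .lam
      | rec' f x M => exact .inl .rec'
      | box M => exact .inl .box
      | app M1 M2 =>
        cases hM with
        | app h1 h2 =>
          rcases ih _ (by simp; try omega) h1 with v1 | ⟨M', h', st⟩
          · rcases ih _ (by simp; try omega) h2 with v2 | ⟨M', h', st⟩
            · rcases canon_arrow h1 v1 with ⟨x, Mb, rfl⟩ | ⟨f, x, Mb, rfl⟩
              · exact .inr ⟨_, _, Step.beta v2⟩
              · exact .inr ⟨_, _, Step.rec' v2⟩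
            · exact .inr ⟨_, _, Step.ktx (K := .appR _ .hole) (.appR v1 .hole) (by simp) st⟩
          · exact .inr ⟨_, _, Step.ktx (K := .appL .hole _) (.appL .hole) (by simp) st⟩
      | arith op M1 M2 =>
        cases hM with
        | arith h1 h2 =>
          rcases ih _ (by simp; try omega) h1 with v1 | ⟨M', h', st⟩
          · rcases ih _ (by simp; try omega) h2 with v2 | ⟨M', h', st⟩
            · obtain ⟨n, rfl⟩ := canon_int h1 v1
              obtain ⟨m, rfl⟩ := canon_int h2 v2
              exact .inr ⟨_, _, Step.arith⟩
            · exact .inr ⟨_, _, Step.ktx (K := .arithR _ _ .hole) (.arithR v1 .hole) (by simp) st⟩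
          · exact .inr ⟨_, _, Step.ktx (K := .arithL _ .hole _) (.arithL .hole) (by simp) st⟩
      | ite M1 M2 M3 =>
        cases hM with
        | ite h1 h2 h3 =>
          rcases ih _ (by simp; try omega) h1 with v1 | ⟨M', h', st⟩
          · obtain ⟨n, rfl⟩ := canon_int h1 v1
            by_cases hn : n = 0
            · subst hn; exact .inr ⟨_, _, Step.iteF⟩
            · exact .inr ⟨_, _, Step.iteT hn⟩
          · exact .inr ⟨_, _, Step.ktx (K := .ite .hole _ _) (.ite .hole) (by simp) st⟩
      | ref M =>
        cases hM with
        | ref h1 =>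
          rcases ih _ (by simp; try omega) h1 with v1 | ⟨M', h', st⟩
          · obtain ⟨l, hl⟩ := fresh_loc Sg
            have hnone : h l = none := by
              have := (hh.1 l).not
              simp [hl] at this
              exact this
            exact .inr ⟨_, _, Step.ref v1 hnone⟩
          · exact .inr ⟨_, _, Step.ktx (K := .ref .hole) (.ref .hole) (by simp) st⟩
      | deref M =>
        cases hM with
        | deref h1 =>
          rcases ih _ (by simp; try omega) h1 with v1 | ⟨M', h', st⟩
          · obtain ⟨l, rfl, hl⟩ := canon_ref h1 v1
            obtain ⟨V, hV, _, _⟩ := hh.2 l _ hl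
            exact .inr ⟨_, _, Step.deref hV⟩
          · exact .inr ⟨_, _, Step.ktx (K := .deref .hole) (.deref .hole) (by simp) st⟩
      | assign M1 M2 =>
        cases hM with
        | assign h1 h2 =>
          rcases ih _ (by simp; try omega) h1 with v1 | ⟨M', h', st⟩
          · rcases ih _ (by simp; try omega) h2 with v2 | ⟨M', h', st⟩
            · obtain ⟨l, rfl, hl⟩ := canon_ref h1 v1
              obtain ⟨V, hV, _, _⟩ := hh.2 l _ hl
              exact .inr ⟨_, _, Step.assign v2 (by simp [hV])⟩
            · exact .inr ⟨_, _, Step.ktx (K := .assignR _ .hole) (.assignR v1 .hole) (by simp) st⟩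
          · exact .inr ⟨_, _, Step.ktx (K := .assignL .hole _) (.assignL .hole) (by simp) st⟩
      | letbox u M1 M2 =>
        cases hM with
        | letbox h1 h2 =>
          rcases ih _ (by simp; try omega) h1 with v1 | ⟨M', h', st⟩
          · obtain ⟨Mb, rfl⟩ := canon_box h1 v1
            exact .inr ⟨_, _, Step.letbox⟩
          · exact .inr ⟨_, _, Step.ktx (K := .letboxL _ .hole _) (.letboxL .hole) (by simp) st⟩

  exact key (sizeOf M) M le_rfl hM
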